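/- If I is a maximum critical independent set of a graph G with Larson set L(G) = I ∪ N(I), then I is a maximum independent set of the induced subgraph G[L(G)], and every maximum matching of G[L(G)] matches N(I) into I (i.e., every edge of a maximum matching of G[L(G)] joins a vertex of N(I) to a vertex of I). -/
import Mathlib


open Finset

variable {V : Type*} [Fintype V] [DecidableEq V] (G : SimpleGraph V) [DecidableRel G.Adj]

/-- `N(S)`: the set of vertices adjacent to some vertex of `S`. -/
def nbhd (S : Finset V) : Finset V := S.biUnion (fun v => G.neighborFinset v)

/-- `S` is an independent set of `G`. -/
def Indep (S : Finset V) : Prop := ∀ u ∈ S, ∀ v ∈ S, ¬ G.Adj u v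

/-- The difference `d_G(S) = |S| - |N(S)|`. -/
def diffI (S : Finset V) : ℤ := (S.card : ℤ) - ((nbhd G S).card : ℤ)

/-- `S` is a maximum independent set of `G`. -/
def IsMaxIndep (S : Finset V) : Prop :=
  Indep G S ∧ ∀ T : Finset V, Indep G T → T.card ≤ S.card

/-- `I` is a critical independent set of `G`. -/
def IsCritIndep (I : Finset V) : Prop :=
  Indep G I ∧ ∀ J : Finset V, Indep G J → diffI G J ≤ diffI G I

/-- `I` is a maximum critical independent set of `G`. -/
def IsMaxCritIndep (I : Finset V) : Prop :=
  IsCritIndep G I ∧ ∀ J : Finset V, IsCritIndep G J → J.card ≤ I.card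

/-- `core(G)`: intersection of all maximum independent sets. -/
def core : Set V := {v | ∀ S : Finset V, IsMaxIndep G S → v ∈ S}

/-- `corona(G)`: union of all maximum independent sets. -/
def corona : Set V := {v | ∃ S : Finset V, IsMaxIndep G S ∧ v ∈ S}

/-- `nucleus(G)`: intersection of all maximum critical independent sets. -/
def nucleus : Set V := {v | ∀ S : Finset V, IsMaxCritIndep G S → v ∈ S}

/-- `diadem(G)`: union of all maximum critical independent sets. -/
def diadem : Set V := {v | ∃ S : Finset V, IsMaxCritIndep G S ∧ v ∈ S}

/-- `ker(G)`: intersection of all critical independent sets. -/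
def kerS : Set V := {v | ∀ S : Finset V, IsCritIndep G S → v ∈ S}

/-- A matching of `G`, given as an involution of the vertex set:
unmatched vertices are fixed points, matched vertices are sent to their partner. -/
def IsMatching (M : V → V) : Prop :=
  Function.Involutive M ∧ ∀ v, M v ≠ v → G.Adj v (M v)

/-- Twice the number of edges of the matching `M`, i.e. the number of matched vertices. -/
def matchSize (M : V → V) : ℕ := (univ.filter fun v => M v ≠ v).card

/-- `M` is a maximum matching of `G`. -/
def IsMaxMatching (M : V → V) : Prop :=
  IsMatching G M ∧ ∀ M' : V → V, IsMatching G M' → matchSize M' ≤ matchSize M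

/-- `M` is a matching of the induced subgraph `G[L]`. -/
def IsMatchingOn (L : Finset V) (M : V → V) : Prop :=
  IsMatching G M ∧ ∀ v, M v ≠ v → v ∈ L

/-- `M` is a maximum matching of the induced subgraph `G[L]`. -/
def IsMaxMatchingOn (L : Finset V) (M : V → V) : Prop :=
  IsMatchingOn G L M ∧ ∀ M' : V → V, IsMatchingOn G L M' → matchSize M' ≤ matchSize M

/-- `S` is a maximum independent set of the induced subgraph `G[L]`. -/
def IsMaxIndepOn (L : Finset V) (S : Finset V) : Prop :=
  S ⊆ L ∧ Indep G S ∧ ∀ T : Finset V, T ⊆ L → Indep G T → T.card ≤ S.card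

/-- `core` of the induced subgraph `G[L]`. -/
def coreOn (L : Finset V) : Set V := {v | ∀ S : Finset V, IsMaxIndepOn G L S → v ∈ S}

/-- `D(G[L])`: vertices of `L` missed by some maximum matching of `G[L]`. -/
def Dset (L : Finset V) : Set V := {v | v ∈ L ∧ ∃ M : V → V, IsMaxMatchingOn G L M ∧ M v = v}

/-- The Larson boundary `∂_L(G)` of the set `L`. -/
def boundaryL (L : Finset V) : Set V := {v | v ∈ L ∧ ∃ w, w ∉ L ∧ G.Adj v w}

/-- The critical difference `d(G)`. -/
noncomputable def critDiff : ℤ := sSup {d : ℤ | ∃ X : Finset V, diffI G X = d}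

/-- The difference of `S` computed in the induced subgraph `G[L]`. -/
def diffOn (L : Finset V) (S : Finset V) : ℤ := (S.card : ℤ) - ((nbhd G S ∩ L).card : ℤ)

/-- The critical difference of the induced subgraph `G[L]`. -/
noncomputable def critDiffOn (L : Finset V) : ℤ := sSup {d : ℤ | ∃ X : Finset V, X ⊆ L ∧ diffOn G L X = d}

/-- `G` is a König–Egerváry graph: `α(G) + μ(G) = |V(G)|`. -/
def KonigEgervary : Prop :=
  ∃ (S : Finset V) (M : V → V), IsMaxIndep G S ∧ IsMaxMatching G M ∧
    2 * S.card + matchSize M = 2 * Fintype.card V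
lemma mem_nbhd {S : Finset V} {v : V} : v ∈ nbhd G S ↔ ∃ u ∈ S, G.Adj u v := by
  simp [nbhd]

lemma nbhd_mono {S T : Finset V} (h : S ⊆ T) : nbhd G S ⊆ nbhd G T := by
  intro v hv
  rw [mem_nbhd] at hv ⊢
  obtain ⟨u, hu, ha⟩ := hv
  exact ⟨u, h hu, ha⟩

lemma indep_disj {I : Finset V} (hI : Indep G I) : Disjoint I (nbhd G I) := by
  rw [Finset.disjoint_left]
  intro v hv hv'
  rw [mem_nbhd] at hv'
  obtain ⟨u, hu, ha⟩ := hv'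
  exact hI u hu v hv ha

lemma hall_cond {I : Finset V} (hI : IsCritIndep G I) :
    ∀ S ⊆ nbhd G I, S.card ≤ (nbhd G S ∩ I).card := by
  intro S hS
  set J : Finset V := I \ nbhd G S with hJ
  have hJI : J ⊆ I := sdiff_subset
  have hJind : Indep G J := fun u hu v hv => hI.1 u (hJI hu) v (hJI hv)
  have hcrit := hI.2 J hJind
  have h1 : J.card + (I ∩ nbhd G S).card = I.card := by
    rw [hJ, sdiff_eq_sdiff_iff_inter_eq_inter.mpr rfl]
    have := Finset.card_inter_add_card_sdiff I (nbhd G S)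
    omega
  have h2 : nbhd G J ⊆ nbhd G I \ S := by
    intro w hw
    rw [Finset.mem_sdiff]
    refine ⟨nbhd_mono G hJI hw, ?_⟩
    intro hwS
    rw [mem_nbhd] at hw
    obtain ⟨j, hj, ha⟩ := hw
    rw [hJ, Finset.mem_sdiff] at hj
    exact hj.2 ((mem_nbhd G).mpr ⟨w, hwS, ha.symm⟩)
  have h3 : (nbhd G J).card ≤ (nbhd G I \ S).card := Finset.card_le_card h2
  have h4 : (nbhd G I \ S).card + S.card = (nbhd G I).card := by
    rw [Finset.card_sdiff_of_subset hS]
    have := Finset.card_le_card hS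
    omega
  have h5 : (nbhd G S ∩ I) = (I ∩ nbhd G S) := Finset.inter_comm _ _
  rw [h5]
  simp only [diffI] at hcrit
  omega

lemma exists_hall_f {I : Finset V} (hI : IsCritIndep G I) :
    ∃ f : {v // v ∈ nbhd G I} → V, Function.Injective f ∧
      ∀ x : {v // v ∈ nbhd G I}, G.Adj x.1 (f x) ∧ f x ∈ I := by
  have hhall : ∀ s : Finset {v // v ∈ nbhd G I},
      s.card ≤ (s.biUnion (fun x => G.neighborFinset x.1 ∩ I)).card := by
    intro s
    have key : s.biUnion (fun x => G.neighborFinset x.1 ∩ I)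
        = nbhd G (s.image (Subtype.val)) ∩ I := by
      ext w
      simp only [Finset.mem_biUnion, Finset.mem_inter, mem_nbhd, Finset.mem_image,
        SimpleGraph.mem_neighborFinset]
      constructor
      · rintro ⟨x, hx, hadj, hwI⟩
        exact ⟨⟨x.1, ⟨x, hx, rfl⟩, hadj⟩, hwI⟩
      · rintro ⟨⟨u, ⟨x, hx, rfl⟩, hadj⟩, hwI⟩
        exact ⟨x, hx, hadj, hwI⟩
    rw [key]
    have hcard : (s.image (Subtype.val)).card = s.card :=
      Finset.card_image_of_injective _ Subtype.val_injective
    rw [← hcard]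
    exact hall_cond G hI _ (by
      intro w hw
      rw [Finset.mem_image] at hw
      obtain ⟨x, _, rfl⟩ := hw
      exact x.2)
  obtain ⟨f, hinj, hf⟩ := (Finset.all_card_le_biUnion_card_iff_exists_injective
    (fun x : {v // v ∈ nbhd G I} => G.neighborFinset x.1 ∩ I)).mp hhall
  exact ⟨f, hinj, fun x => by
    have := hf x
    rw [Finset.mem_inter, SimpleGraph.mem_neighborFinset] at this
    exact this⟩

open Classical in
lemma exists_hall_matching {I : Finset V} (hI : IsCritIndep G I) :
    ∃ M : V → V, (Function.Involutive M ∧ ∀ v, M v ≠ v → G.Adj v (M v)) ∧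
      (∀ v, M v ≠ v → v ∈ I ∪ nbhd G I) ∧
      2 * (nbhd G I).card ≤ (univ.filter fun v => M v ≠ v).card := by
  obtain ⟨f, hinj, hf⟩ := exists_hall_f G hI
  have hdisj : Disjoint I (nbhd G I) := indep_disj G hI.1
  have hfnotin : ∀ x, f x ∉ nbhd G I := fun x hx =>
    (Finset.disjoint_left.mp hdisj (hf x).2) hx
  let M : V → V := fun v =>
    if h : v ∈ nbhd G I then f ⟨v, h⟩
    else if h2 : ∃ x : {u // u ∈ nbhd G I}, f x = v then h2.choose.1 else v
  have hM1 : ∀ (v : V) (h : v ∈ nbhd G I), M v = f ⟨v, h⟩ := fun v h => dif_pos h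
  have hM2 : ∀ x : {u // u ∈ nbhd G I}, M (f x) = x.1 := by
    intro x
    have hnx : f x ∉ nbhd G I := hfnotin x
    have hex : ∃ y : {u // u ∈ nbhd G I}, f y = f x := ⟨x, rfl⟩
    have : M (f x) = hex.choose.1 := by simp only [M, dif_neg hnx, dif_pos hex]
    rw [this, hinj hex.choose_spec]
  have hM3 : ∀ v, v ∉ nbhd G I → (¬ ∃ x : {u // u ∈ nbhd G I}, f x = v) → M v = v := by
    intro v h h2; simp only [M, dif_neg h, dif_neg h2]
  have hinv : Function.Involutive M := by
    intro v
    by_cases h : v ∈ nbhd G I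
    · rw [hM1 v h, hM2]
    · by_cases h2 : ∃ x : {u // u ∈ nbhd G I}, f x = v
      · have : M v = h2.choose.1 := by simp only [M, dif_neg h, dif_pos h2]
        rw [this, hM1 _ h2.choose.2]
        simpa using h2.choose_spec
      · rw [hM3 v h h2, hM3 v h h2]
  refine ⟨M, ⟨hinv, ?_⟩, ?_, ?_⟩
  · intro v hv
    by_cases h : v ∈ nbhd G I
    · rw [hM1 v h]; exact (hf ⟨v, h⟩).1
    · by_cases h2 : ∃ x : {u // u ∈ nbhd G I}, f x = v
      · have hMv : M v = h2.choose.1 := by simp only [M, dif_neg h, dif_pos h2]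
        rw [hMv]
        have := (hf h2.choose).1
        rw [h2.choose_spec] at this
        exact this.symm
      · exact absurd (hM3 v h h2) hv
  · intro v hv
    by_cases h : v ∈ nbhd G I
    · exact Finset.mem_union_right _ h
    · by_cases h2 : ∃ x : {u // u ∈ nbhd G I}, f x = v
      · obtain ⟨x, rfl⟩ := h2
        exact Finset.mem_union_left _ (hf x).2
      · exact absurd (hM3 v h h2) hv
  · have hsub : nbhd G I ∪ ((nbhd G I).attach.image fun x => f x)
        ⊆ univ.filter fun v => M v ≠ v := by
      intro v hv
      rw [Finset.mem_filter]
      refine ⟨Finset.mem_univ _, ?_⟩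
      rw [Finset.mem_union] at hv
      rcases hv with h | h
      · rw [hM1 v h]
        intro heq
        exact hfnotin ⟨v, h⟩ (by rw [heq]; exact h)
      · rw [Finset.mem_image] at h
        obtain ⟨x, _, rfl⟩ := h
        rw [hM2]
        intro heq
        exact hfnotin x (heq ▸ x.2)
    have hd : Disjoint (nbhd G I) ((nbhd G I).attach.image fun x => f x) := by
      rw [Finset.disjoint_right]
      intro v hv
      rw [Finset.mem_image] at hv
      obtain ⟨x, _, rfl⟩ := hv
      exact hfnotin x
    have hcard : ((nbhd G I).attach.image fun x => f x).card = (nbhd G I).card := by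
      rw [Finset.card_image_of_injective _ (fun a b hab => Subtype.ext_iff.mpr ?_),
        Finset.card_attach]
      exact Subtype.ext_iff.mp (hinj hab)
    calc 2 * (nbhd G I).card
        = (nbhd G I ∪ ((nbhd G I).attach.image fun x => f x)).card := by
          rw [Finset.card_union_of_disjoint hd, hcard]; ring
      _ ≤ _ := Finset.card_le_card hsub

theorem stmt3 (I : Finset V) (hI : IsMaxCritIndep G I) :
    IsMaxIndepOn G (I ∪ nbhd G I) I ∧
    ∀ M : V → V, IsMaxMatchingOn G (I ∪ nbhd G I) M →
      (∀ v ∈ nbhd G I, M v ≠ v ∧ M v ∈ I) ∧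
      (∀ v, M v ≠ v → (v ∈ nbhd G I ∧ M v ∈ I) ∨ (v ∈ I ∧ M v ∈ nbhd G I)) := by
  
  have hcrit : IsCritIndep G I := hI.1
  have hind : Indep G I := hcrit.1
  have hdisj : Disjoint I (nbhd G I) := indep_disj G hind
  constructor
  · refine ⟨Finset.subset_union_left, hind, ?_⟩
    intro T hTL hTind
    set S : Finset V := T ∩ nbhd G I with hS
    have hhall : S.card ≤ (nbhd G S ∩ I).card :=
      hall_cond G hcrit S Finset.inter_subset_right
    have hTI : T ∩ I ⊆ I \ (nbhd G S ∩ I) := by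
      intro v hv
      rw [Finset.mem_inter] at hv
      rw [Finset.mem_sdiff]
      refine ⟨hv.2, ?_⟩
      rw [Finset.mem_inter, mem_nbhd]
      rintro ⟨⟨s, hsS, hadj⟩, -⟩
      rw [hS, Finset.mem_inter] at hsS
      exact hTind s hsS.1 v hv.1 hadj
    have h1 : (T ∩ I).card ≤ (I \ (nbhd G S ∩ I)).card := Finset.card_le_card hTI
    have h2 : (I \ (nbhd G S ∩ I)).card + (nbhd G S ∩ I).card = I.card := by
      rw [Finset.card_sdiff_of_subset Finset.inter_subset_right]
      have := Finset.card_le_card (Finset.inter_subset_right (s₁ := nbhd G S) (s₂ := I))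
      omega
    have h3 : T.card = (T ∩ I).card + S.card := by
      have hTeq : T = (T ∩ I) ∪ S := by
        rw [hS, ← Finset.inter_union_distrib_left]
        exact (Finset.inter_eq_left.mpr hTL).symm
      have hd : Disjoint (T ∩ I) S := by
        refine Finset.disjoint_of_subset_left Finset.inter_subset_right ?_
        exact Finset.disjoint_of_subset_right Finset.inter_subset_right hdisj
      conv_lhs => rw [hTeq]
      exact Finset.card_union_of_disjoint hd
    omega
  · intro M hM
    obtain ⟨M₀, hM₀match, hM₀mem, hM₀size⟩ := exists_hall_matching G hcrit
    have hlow : 2 * (nbhd G I).card ≤ matchSize M := by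
      have := hM.2 M₀ ⟨hM₀match, hM₀mem⟩
      calc 2 * (nbhd G I).card ≤ matchSize M₀ := hM₀size
        _ ≤ matchSize M := this
    set E : Finset V := univ.filter (fun v => M v ≠ v) with hE
    have hMinv : Function.Involutive M := hM.1.1.1
    have hMadj : ∀ v, M v ≠ v → G.Adj v (M v) := hM.1.1.2
    have hMmem : ∀ v, M v ≠ v → v ∈ I ∪ nbhd G I := hM.1.2
    have hmE : ∀ v, v ∈ E ↔ M v ≠ v := by
      intro v; rw [hE, Finset.mem_filter]; simp
    set A : Finset V := E ∩ nbhd G I with hA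
    set B : Finset V := E ∩ I with hB
    have hAsub : A ⊆ nbhd G I := Finset.inter_subset_right
    have hBsub : B ⊆ I := Finset.inter_subset_right
    clear_value E A B
    have hMB : ∀ v ∈ B, M v ∈ A := by
      intro v hv
      rw [hB, Finset.mem_inter] at hv
      have hvE : M v ≠ v := (hmE v).mp hv.1
      rw [hA, Finset.mem_inter, hmE, mem_nbhd]
      refine ⟨?_, v, hv.2, hMadj v hvE⟩
      rw [hMinv v]
      exact fun h => hvE h.symm
    have hBA : B.card ≤ A.card :=
      Finset.card_le_card_of_injOn M hMB (Function.Involutive.injective hMinv).injOn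
    have hEAB : E.card = A.card + B.card := by
      have hEsub : E ⊆ nbhd G I ∪ I := by
        intro v hv
        rw [Finset.union_comm]
        exact hMmem v ((hmE v).mp hv)
      have heq : A ∪ B = E := by
        rw [hA, hB, ← Finset.inter_union_distrib_left]
        exact Finset.inter_eq_left.mpr hEsub
      have hd : Disjoint A B :=
        Finset.disjoint_of_subset_left hAsub
          (Finset.disjoint_of_subset_right hBsub hdisj.symm)
      rw [← heq, Finset.card_union_of_disjoint hd]
    have hAle : A.card ≤ (nbhd G I).card := Finset.card_le_card hAsub
    have hmsE : matchSize M = E.card := by rw [hE]; rfl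
    have hlowE : 2 * (nbhd G I).card ≤ A.card + B.card := by
      rw [← hEAB, ← hmsE]; exact hlow
    have hAcard : A.card = (nbhd G I).card := by omega
    have hBcard : B.card = A.card := by omega
    have hAfull : nbhd G I = A :=
      (Finset.eq_of_subset_of_card_le hAsub (by omega)).symm
    have himg : B.image M = A := by
      apply Finset.eq_of_subset_of_card_le
      · intro v hv
        rw [Finset.mem_image] at hv
        obtain ⟨b, hb, rfl⟩ := hv
        exact hMB b hb
      · rw [Finset.card_image_of_injOn (Function.Involutive.injective hMinv).injOn]
        omega
    have key : ∀ v ∈ nbhd G I, M v ≠ v ∧ M v ∈ I := by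
      intro v hvN
      have hvA : v ∈ A := hAfull ▸ hvN
      have hvE : M v ≠ v := by
        rw [hA] at hvA
        exact (hmE v).mp (Finset.mem_inter.mp hvA).1
      refine ⟨hvE, ?_⟩
      have : v ∈ B.image M := himg.symm ▸ hvA
      rw [Finset.mem_image] at this
      obtain ⟨b, hb, hbv⟩ := this
      have : M v = b := by rw [← hbv, hMinv b]
      rw [this]
      rw [hB] at hb
      exact (Finset.mem_inter.mp hb).2
    refine ⟨key, ?_⟩
    intro v hv
    rcases Finset.mem_union.mp (hMmem v hv) with h | h
    · right
      refine ⟨h, ?_⟩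
      rw [mem_nbhd]
      exact ⟨v, h, hMadj v hv⟩
    · left
      exact ⟨h, (key v h).2⟩
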